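/- arXiv:0812.4264 — 2 statements merged into one kernel-verified Lean document; each statement's English description precedes it below -/
import Mathlib

section
/- A non-abelian free group F_n (n ≥ 2) has no non-trivial finitely generated normal subgroup of infinite index. -/
/-!
Let `π : F → G = F ⧸ N` be the projection. The Fox derivative `∂/∂xᵢ`, pushed forward to `ℤ[G]`,
is additive on `N` and satisfies `∂(g u g⁻¹) = π g • ∂u` there, so its values on `N` generate a
left-`G`-invariant additive subgroup of `ℤ[G]`, finitely generated if `N` is. If `G` is infinite,
such a subgroup is zero: its elements are all supported in one finite set, but some left translate
of a nonzero element is not.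

On the other hand, let `u` be a shortest nontrivial element of `N`. It is cyclically reduced and no
proper subword of it lies in `N`, so it traces a simple loop in the Cayley graph of `G`. If its first
letter is `xᵢ^{±1}`, the coefficient of `∂u/∂xᵢ` at the vertex where the first `xᵢ`-edge of the loop
starts is `±1`. Hence `G` is finite.
-/

open MonoidAlgebra

namespace MonoidAlgebra

variable {k G : Type*} [Semiring k]

theorem exists_finset_forall_support_subset_of_fg {A : AddSubmonoid k[G]} (hA : A.FG) :
    ∃ K : Finset G, ∀ x ∈ A, x.coeff.support ⊆ K := by
  classical
  obtain ⟨S, rfl⟩ := hA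
  refine ⟨S.biUnion fun x ↦ x.coeff.support, fun x hx ↦ ?_⟩
  induction hx using AddSubmonoid.closure_induction with
  | mem x hx => exact Finset.subset_biUnion_of_mem (fun x ↦ x.coeff.support) hx
  | zero => simp
  | add x y _ _ hx hy => exact Finsupp.support_add.trans (Finset.union_subset hx hy)

theorem eq_bot_of_fg_of_single_mul_mem [Group G] [Infinite G] {A : AddSubmonoid k[G]}
    (hA : A.FG) (hmul : ∀ g, ∀ x ∈ A, single g 1 * x ∈ A) : A = ⊥ := by
  classical
  obtain ⟨K, hK⟩ := exists_finset_forall_support_subset_of_fg hA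
  refine (AddSubmonoid.eq_bot_iff_forall A).2 fun x hx ↦ ?_
  by_contra hx₀
  obtain ⟨y, hy⟩ : x.coeff.support.Nonempty := by simpa using hx₀
  obtain ⟨g, hg⟩ := Infinite.exists_notMem_finset (K.image (· * y⁻¹))
  have hgy : g * y ∈ K := hK _ (hmul g x hx) (by simpa [coeff_single_mul_apply] using hy)
  exact hg (Finset.mem_image.2 ⟨g * y, hgy, by simp⟩)

noncomputable def leftTranslationAut (R G : Type*) [Ring R] [Group G] :
    G →* MulAut (Multiplicative R[G]) :=
  (MulAutMultiplicative R[G]).symm.toMonoidHom.comp <|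
    (DistribMulAction.toAddAut R[G]ˣ R[G]).comp <|
      (Units.map (MonoidAlgebra.of R G)).comp toUnits.toMonoidHom

end MonoidAlgebra

namespace FreeGroup

variable {α G : Type*} [Group G]

theorem mk_take_succ_cons (a : α × Bool) (L : List (α × Bool)) (j : ℕ) :
    mk ((a :: L).take (j + 1)) = mk [a] * mk (L.take j) := by
  rw [List.take_succ_cons, mul_mk, List.singleton_append]

theorem injOn_map_mk_take (π : FreeGroup α →* G) {L : List (α × Bool)}
    (hL : ∀ s, s <:+: L → s ≠ [] → π (mk s) ≠ 1) :
    Set.InjOn (fun j ↦ π (mk (L.take j))) (Set.Iic L.length) := by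
  have hlt : ∀ j j', j < j' → j' ≤ L.length → π (mk (L.take j)) ≠ π (mk (L.take j')) := by
    intro j j' hjj' hj' heq
    set seg := (L.take j').drop j
    have hsplit : mk (L.take j) * mk seg = mk (L.take j') := by
      rw [mul_mk]
      conv_rhs => rw [← List.take_append_drop j (L.take j'), List.take_take, min_eq_left hjj'.le]
    refine hL seg ((List.drop_suffix j _).isInfix.trans (List.take_prefix j' L).isInfix) ?_ ?_
    · simp only [seg, ne_eq, List.drop_eq_nil_iff, List.length_take]
      omega
    · rwa [← hsplit, π.map_mul, left_eq_mul] at heq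
  intro j hj j' hj' heq
  rcases lt_trichotomy j j' with h | h | h
  · exact absurd heq (hlt j j' h hj')
  · exact h
  · exact absurd heq.symm (hlt j' j h hj)

section Shortest

variable [DecidableEq α] {N : Subgroup (FreeGroup α)} {u : FreeGroup α}

theorem mk_notMem_of_length_lt_norm (hmin : ∀ v ∈ N, v ≠ 1 → norm u ≤ norm v)
    {s : List (α × Bool)} (hs : IsReduced s) (hs₀ : s ≠ []) (hlt : s.length < norm u) :
    mk s ∉ N := by
  intro hmem
  have hne : mk s ≠ 1 := by rwa [ne_eq, ← toWord_eq_nil_iff, toWord_mk, hs.reduce_eq]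
  have := hmin _ hmem hne
  have := norm_mk_le (L₁ := s)
  omega

theorem isCyclicallyReduced_toWord_of_norm_le [N.Normal] (hu : u ∈ N) (hu₁ : u ≠ 1)
    (hmin : ∀ v ∈ N, v ≠ 1 → norm u ≤ norm v) : IsCyclicallyReduced u.toWord := by
  refine ⟨isReduced_toWord, fun c hc a ha hca ↦ ?_⟩
  by_contra hne
  have hlen : norm u = u.toWord.length := rfl
  have hw : mk u.toWord = u := mk_toWord
  generalize u.toWord = w at ha hc hlen hw
  induction w using List.bidirectionalRecOn with
  | H0 => simp at ha
  | H1 x => simp_all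
  | Hn x m y _ =>
    obtain rfl : x = a := by simpa using ha
    obtain rfl : y = c := by
      rw [← List.cons_append, List.getLast?_concat] at hc
      simpa using hc
    have hinv : mk [y] = (mk [x])⁻¹ := by
      rw [show y = (x.1, !x.2) from Prod.ext hca (Bool.eq_not.2 hne), inv_mk]
      rfl
    have hconj : (mk [x])⁻¹ * u * (mk [x])⁻¹⁻¹ = mk m := by
      rw [← hw, show x :: (m ++ [y]) = [x] ++ m ++ [y] from rfl, ← mul_mk, ← mul_mk, hinv]
      group
    have hmem : mk m ∈ N := hconj ▸ ‹N.Normal›.conj_mem u hu (mk [x])⁻¹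
    have hm₁ : mk m ≠ 1 := hconj ▸ conj_eq_one_iff.not.2 hu₁
    have := hmin _ hmem hm₁
    have := norm_mk_le (L₁ := m)
    simp only [List.length_cons, List.length_append, List.length_nil, zero_add] at hlen
    omega

theorem injOn_map_mk_take_of_toWord_eq_cons (π : FreeGroup α →* G)
    (hmin : ∀ v ∈ π.ker, v ≠ 1 → norm u ≤ norm v) {a : α × Bool} {t : List (α × Bool)}
    (hw : u.toWord = a :: t) : Set.InjOn (fun j ↦ π (mk (t.take j))) (Set.Iic t.length) := by
  refine injOn_map_mk_take π fun s hs hs₀ ↦ ?_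
  have hs' : s <:+: u.toWord := hw ▸ hs.trans (List.suffix_cons a t).isInfix
  have hlt : s.length < norm u := by
    have := hs.length_le
    rw [norm, hw, List.length_cons]
    omega
  simpa using mk_notMem_of_length_lt_norm hmin (isReduced_toWord.infix hs') hs₀ hlt

end Shortest

section Fox

variable [DecidableEq α] (π : FreeGroup α →* G) (i : α)

/- The product rule of the Fox derivative is the multiplication of `ℤ[G] ⋊ G`, so the derivative
is the `ℤ[G]`-component of the lift of `xⱼ ↦ (δᵢⱼ, π xⱼ)`. -/
noncomputable def foxHom : FreeGroup α →* Multiplicative ℤ[G] ⋊[leftTranslationAut ℤ G] G :=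
  FreeGroup.lift fun j ↦ ⟨Multiplicative.ofAdd (if j = i then 1 else 0), π (of j)⟩

/-- The image in `ℤ[G]` under `π` of the Fox derivative `∂w/∂xᵢ`. -/
noncomputable def foxDeriv (w : FreeGroup α) : ℤ[G] := (foxHom π i w).left.toAdd

theorem foxHom_right (w : FreeGroup α) : (foxHom π i w).right = π w := by
  suffices SemidirectProduct.rightHom.comp (foxHom π i) = π from DFunLike.congr_fun this w
  ext j
  simp [foxHom]

theorem foxDeriv_mul (u v : FreeGroup α) :
    foxDeriv π i (u * v) = foxDeriv π i u + single (π u) 1 * foxDeriv π i v := by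
  simp only [foxDeriv, _root_.map_mul, SemidirectProduct.mul_left, foxHom_right]
  rfl

@[simp] theorem foxDeriv_one : foxDeriv π i 1 = 0 := by
  simp [foxDeriv]

theorem foxDeriv_inv (u : FreeGroup α) :
    foxDeriv π i u⁻¹ = -(single (π u)⁻¹ 1 * foxDeriv π i u) := by
  have h := foxDeriv_mul π i u⁻¹ u
  rw [inv_mul_cancel, foxDeriv_one, _root_.map_inv] at h
  exact eq_neg_of_add_eq_zero_left h.symm

theorem foxDeriv_of (j : α) : foxDeriv π i (of j) = if j = i then 1 else 0 := by
  simp [foxDeriv, foxHom]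

theorem foxDeriv_mul_of_mem_ker {u : FreeGroup α} (hu : u ∈ π.ker) (v : FreeGroup α) :
    foxDeriv π i (u * v) = foxDeriv π i u + foxDeriv π i v := by
  rw [foxDeriv_mul, π.mem_ker.1 hu, ← one_def, one_mul]

theorem foxDeriv_inv_of_mem_ker {u : FreeGroup α} (hu : u ∈ π.ker) :
    foxDeriv π i u⁻¹ = -foxDeriv π i u := by
  rw [foxDeriv_inv, π.mem_ker.1 hu, inv_one, ← one_def, one_mul]

theorem foxDeriv_conj_of_mem_ker {u : FreeGroup α} (hu : u ∈ π.ker) (g : FreeGroup α) :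
    foxDeriv π i (g * u * g⁻¹) = single (π g) 1 * foxDeriv π i u := by
  rw [foxDeriv_mul, foxDeriv_mul, foxDeriv_inv, _root_.map_mul, π.mem_ker.1 hu, mul_one,
    mul_neg, ← mul_assoc, single_mul_single, mul_inv_cancel, mul_one, ← one_def, one_mul]
  abel

noncomputable def foxDerivSpan : AddSubgroup ℤ[G] :=
  AddSubgroup.closure (foxDeriv π i '' π.ker)

theorem foxDerivSpan_fg (hfg : π.ker.FG) : (foxDerivSpan π i).FG := by
  classical
  obtain ⟨T, hT⟩ := hfg
  refine ⟨T.image (foxDeriv π i), le_antisymm ?_ ?_⟩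
  · rw [Finset.coe_image]
    exact AddSubgroup.closure_mono (Set.image_mono (hT ▸ Subgroup.subset_closure))
  · rw [foxDerivSpan, AddSubgroup.closure_le]
    rintro _ ⟨v, hv, rfl⟩
    rw [← hT] at hv
    induction hv using Subgroup.closure_induction with
    | mem v hv => exact AddSubgroup.subset_closure (by simpa using ⟨v, hv, rfl⟩)
    | one => simp
    | mul v w hv _ ihv ihw =>
      rw [foxDeriv_mul_of_mem_ker π i (hT ▸ hv)]
      exact add_mem ihv ihw
    | inv v hv ih =>
      rw [foxDeriv_inv_of_mem_ker π i (hT ▸ hv)]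
      exact neg_mem ih

theorem single_mul_mem_foxDerivSpan (hπ : Function.Surjective π) (g : G) {x : ℤ[G]}
    (hx : x ∈ foxDerivSpan π i) : single g 1 * x ∈ foxDerivSpan π i := by
  obtain ⟨w, rfl⟩ := hπ g
  induction hx using AddSubgroup.closure_induction with
  | mem _ hx =>
    obtain ⟨v, hv, rfl⟩ := hx
    rw [← foxDeriv_conj_of_mem_ker π i hv]
    exact AddSubgroup.subset_closure ⟨_, π.normal_ker.conj_mem v hv w, rfl⟩
  | zero => simp
  | add x y _ _ hx hy => simpa [mul_add] using add_mem hx hy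
  | neg x _ hx => simpa [mul_neg] using neg_mem hx

theorem foxDeriv_eq_zero_of_mem_ker [Infinite G] (hπ : Function.Surjective π) (hfg : π.ker.FG)
    {u : FreeGroup α} (hu : u ∈ π.ker) : foxDeriv π i u = 0 := by
  have hbot := eq_bot_of_fg_of_single_mul_mem
    ((AddSubgroup.fg_iff_addSubmonoid_fg _).1 (foxDerivSpan_fg π i hfg))
    (fun g _ ↦ single_mul_mem_foxDerivSpan π i hπ g)
  have hu_mem : foxDeriv π i u ∈ (foxDerivSpan π i).toAddSubmonoid :=
    AddSubgroup.subset_closure ⟨u, hu, rfl⟩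
  rwa [hbot, AddSubmonoid.mem_bot] at hu_mem

theorem foxDeriv_mk_concat (L : List (α × Bool)) (c : α × Bool) :
    foxDeriv π i (mk (L ++ [c])) =
      foxDeriv π i (mk L) + single (π (mk L)) 1 * foxDeriv π i (mk [c]) := by
  rw [← foxDeriv_mul, mul_mk]

theorem coeff_foxDeriv_mk_cons (a : α × Bool) (L : List (α × Bool)) (γ : G) :
    (foxDeriv π i (mk (a :: L))).coeff γ =
      (foxDeriv π i (mk [a])).coeff γ + (foxDeriv π i (mk L)).coeff ((π (mk [a]))⁻¹ * γ) := by
  rw [← List.singleton_append, ← mul_mk, foxDeriv_mul, coeff_add, Finsupp.add_apply,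
    coeff_single_mul_apply, one_mul]

/- A letter is an edge of the Cayley graph of `G`; a positive `xᵢ`-edge contributes `1` at its
start, a negative one `-1` at its end. -/
open scoped Classical in
theorem coeff_foxDeriv_mk_singleton (a : α × Bool) (γ : G) :
    (foxDeriv π i (mk [a])).coeff γ =
      (if a = (i, true) ∧ γ = 1 then 1 else 0) -
        (if a = (i, false) ∧ γ = π (mk [a]) then 1 else 0) := by
  obtain ⟨j, _ | _⟩ := a
  · have h : mk [(j, false)] = (of j)⁻¹ := by simp [of, inv_mk, invRev]
    by_cases hj : j = i
    · subst hj
      simp [h, foxDeriv_inv, foxDeriv_of, Finsupp.single_apply, eq_comm]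
    · simp [h, hj, foxDeriv_inv, foxDeriv_of]
  · by_cases hj : j = i
    · subst hj
      simp [← of.eq_def, foxDeriv_of, one_def, Finsupp.single_apply, eq_comm]
    · simp [← of.eq_def, hj, foxDeriv_of]

theorem coeff_foxDeriv_mk_eq_zero {L : List (α × Bool)} {γ : G}
    (hγ : ∀ j ≤ L.length, π (mk (L.take j)) ≠ γ) : (foxDeriv π i (mk L)).coeff γ = 0 := by
  induction L generalizing γ with
  | nil => simp [← one_eq_mk]
  | cons a L ih =>
    have h0 : 1 ≠ γ := by simpa [← one_eq_mk] using hγ 0 (by simp)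
    have h1 : π (mk [a]) ≠ γ := by simpa using hγ 1 (by simp)
    have htail : ∀ j ≤ L.length, π (mk (L.take j)) ≠ (π (mk [a]))⁻¹ * γ := by
      intro j hj
      rw [ne_eq, eq_inv_mul_iff_mul_eq, ← π.map_mul, ← mk_take_succ_cons]
      exact hγ (j + 1) (by simpa using hj)
    rw [coeff_foxDeriv_mk_cons, coeff_foxDeriv_mk_singleton, ih htail]
    simp [h0.symm, h1.symm]

theorem coeff_foxDeriv_mk_one {L : List (α × Bool)}
    (hL : Set.InjOn (fun j ↦ π (mk (L.take j))) (Set.Iic L.length)) :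
    (foxDeriv π i (mk L)).coeff 1 = if L.head? = some (i, true) then 1 else 0 := by
  cases L with
  | nil => simp [← one_eq_mk]
  | cons a L =>
    have hne : ∀ j ≤ L.length, π (mk [a]) * π (mk (L.take j)) ≠ 1 := by
      intro j hj
      have h := hL.ne (x := j + 1) (y := 0) (by simpa using hj) (by simp) (Nat.succ_ne_zero j)
      rwa [mk_take_succ_cons, List.take_zero, ← one_eq_mk, π.map_mul, π.map_one] at h
    have htail : ∀ j ≤ L.length, π (mk (L.take j)) ≠ (π (mk [a]))⁻¹ * 1 := by
      intro j hj
      rw [ne_eq, eq_inv_mul_iff_mul_eq]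
      exact hne j hj
    have h1 : π (mk [a]) ≠ 1 := by simpa [← one_eq_mk] using hne 0 (Nat.zero_le _)
    rw [coeff_foxDeriv_mk_cons, coeff_foxDeriv_mk_singleton, coeff_foxDeriv_mk_eq_zero π i htail]
    simp [h1.symm]

theorem coeff_foxDeriv_mk_map_mk {L : List (α × Bool)}
    (hL : Set.InjOn (fun j ↦ π (mk (L.take j))) (Set.Iic L.length)) :
    (foxDeriv π i (mk L)).coeff (π (mk L)) =
      if L.getLast? = some (i, false) then -1 else 0 := by
  cases L using List.reverseRecOn with
  | nil => simp [← one_eq_mk]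
  | append_singleton L c =>
    have hne : ∀ j ≤ L.length, π (mk (L.take j)) ≠ π (mk (L ++ [c])) := by
      intro j hj
      have h := hL.ne (x := j) (y := L.length + 1) (by simp; omega) (by simp) (by omega)
      rwa [List.take_append_of_le_length hj, List.take_of_length_le (l := L ++ [c]) (by simp)]
        at h
    have hc : π (mk [c]) ≠ 1 := by
      simpa [← mul_mk] using hne L.length le_rfl
    rw [foxDeriv_mk_concat, coeff_add, Finsupp.add_apply, coeff_foxDeriv_mk_eq_zero π i hne,
      coeff_single_mul_apply, one_mul, ← mul_mk, π.map_mul, inv_mul_cancel_left,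
      coeff_foxDeriv_mk_singleton]
    simp [hc, apply_ite]

end Fox

theorem exists_foxDeriv_ne_zero [DecidableEq α] (π : FreeGroup α →* G) (hπ : π.ker ≠ ⊥) :
    ∃ u ∈ π.ker, ∃ i, foxDeriv π i u ≠ 0 := by
  obtain ⟨u, ⟨hu, hu₁⟩, hmin⟩ := (measure norm).wf.has_min {v | v ∈ π.ker ∧ v ≠ 1} <| by
    obtain ⟨⟨v, hv⟩, hv₁⟩ := Subgroup.ne_bot_iff_exists_ne_one.1 hπ
    exact ⟨v, hv, by simpa using hv₁⟩
  replace hmin : ∀ v ∈ π.ker, v ≠ 1 → norm u ≤ norm v :=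
    fun v hv hv₁ ↦ not_lt.1 (hmin v ⟨hv, hv₁⟩)
  obtain ⟨a, t, hw⟩ := List.exists_cons_of_ne_nil (toWord_eq_nil_iff.not.2 hu₁)
  have hcyc : IsCyclicallyReduced (a :: t) :=
    hw ▸ isCyclicallyReduced_toWord_of_norm_le hu hu₁ hmin
  have hpath := injOn_map_mk_take_of_toWord_eq_cons π hmin hw
  have hu_eq : u = mk (a :: t) := by rw [← hw, mk_toWord]
  obtain ⟨i, _ | _⟩ := a
  · refine ⟨u, hu, i, fun h ↦ ?_⟩
    have hcoeff := congrArg (fun x ↦ x.coeff (π (mk [(i, false)]))) h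
    rw [hu_eq, coeff_foxDeriv_mk_cons, inv_mul_cancel, coeff_foxDeriv_mk_one π i hpath,
      coeff_foxDeriv_mk_singleton] at hcoeff
    have hhead : t.head? ≠ some (i, true) := by
      intro h
      obtain ⟨t', rfl⟩ := List.head?_eq_some_iff.1 h
      simpa using hcyc.isReduced
    simp [hhead] at hcoeff
  · refine ⟨u, hu, i, fun h ↦ ?_⟩
    have hcoeff := congrArg (fun x ↦ x.coeff 1) h
    have hinv : (π (mk [(i, true)]))⁻¹ * 1 = π (mk t) := by
      rw [mul_one, inv_eq_iff_mul_eq_one, ← π.map_mul, mul_mk]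
      exact hu_eq ▸ hu
    rw [hu_eq, coeff_foxDeriv_mk_cons, hinv, coeff_foxDeriv_mk_map_mk π i hpath,
      coeff_foxDeriv_mk_singleton] at hcoeff
    have hlast : t.getLast? ≠ some (i, false) := by
      intro h
      obtain ⟨t', rfl⟩ := List.getLast?_eq_some_iff.1 h
      simpa using hcyc.2 (i, false) (by rw [← List.cons_append, List.getLast?_concat]; rfl)
        (i, true) (by simp) rfl
    simp [hlast] at hcoeff

end FreeGroup

theorem stmt1_general (n : ℕ) (N : Subgroup (FreeGroup (Fin n))) [N.Normal]
    (hfg : N.FG) (hne : N ≠ ⊥) : N.FiniteIndex := by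
  by_contra hfin
  have : Infinite (FreeGroup (Fin n) ⧸ N) :=
    Subgroup.index_eq_zero_iff_infinite.1 (Subgroup.not_finiteIndex_iff.1 hfin)
  obtain ⟨u, hu, i, hd⟩ :=
    FreeGroup.exists_foxDeriv_ne_zero (QuotientGroup.mk' N) (by rwa [QuotientGroup.ker_mk'])
  exact hd (FreeGroup.foxDeriv_eq_zero_of_mem_ker _ i (QuotientGroup.mk'_surjective N)
    (by rwa [QuotientGroup.ker_mk']) hu)

/-- A non-abelian free group `F_n` (`n ≥ 2`) has no non-trivial finitely generated
normal subgroup of infinite index: such a subgroup must have finite index. -/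
theorem stmt1 (n : ℕ) (hn : 2 ≤ n) (N : Subgroup (FreeGroup (Fin n))) [N.Normal]
    (hfg : N.FG) (hne : N ≠ ⊥) : N.FiniteIndex :=
  stmt1_general n N hfg hne
end

section
/- If G is a finitely generated group such that in every finite quotient of G the relation h·g·h⁻¹ = g² holds for images of fixed elements g, h ∈ G, then the image of g is trivial in every finite quotient of G. -/
/-! Write `x`, `y` for the images of `g`, `h` and `n` for the order of `y`. Iterating the relation
gives `y ^ k * x * y⁻¹ ^ k = x ^ 2 ^ k`, so `k = n` shows that the order of `x` divides `2 ^ n - 1`.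
Conjugate elements have the same order, so `n ∣ 2 ^ n - 1`, which forces `n = 1`: otherwise the
least prime factor `p` of `n` divides `2 ^ n - 1`, and the order of `2` modulo `p` divides both `n`
and `p - 1`, which are coprime, so `2 ≡ 1 [MOD p]`. -/

theorem ZMod.eq_one_of_pow_eq_one_of_le_minFac {p n : ℕ} [Fact p.Prime] (hn : n ≠ 0)
    (hp : p ≤ n.minFac) {a : ZMod p} (ha : a ^ n = 1) : a = 1 := by
  have ha0 : a ≠ 0 := by
    rintro rfl
    simp [zero_pow hn] at ha
  have hp2 := (Fact.out : p.Prime).two_le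
  have hcop : n.gcd (p - 1) = 1 := Nat.gcd_eq_one_of_lt_minFac (by omega) (by omega)
  simpa [hcop] using pow_gcd_eq_one.mpr ⟨ha, ZMod.pow_card_sub_one_eq_one ha0⟩

theorem Nat.eq_one_of_dvd_two_pow_sub_one {n : ℕ} (hn : n ≠ 0) (h : n ∣ 2 ^ n - 1) : n = 1 := by
  by_contra hn1
  have : Fact n.minFac.Prime := ⟨Nat.minFac_prime hn1⟩
  have hpow : (2 : ZMod n.minFac) ^ n = 1 := by
    have := (ZMod.natCast_eq_zero_iff _ _).mpr ((Nat.minFac_dvd n).trans h)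
    rwa [Nat.cast_sub Nat.one_le_two_pow, sub_eq_zero, Nat.cast_pow, Nat.cast_ofNat,
      Nat.cast_one] at this
  have h2 := ZMod.eq_one_of_pow_eq_one_of_le_minFac hn le_rfl hpow
  exact one_ne_zero (by linear_combination h2 : (1 : ZMod n.minFac) = 0)

theorem conj_pow_eq_pow_pow {G : Type*} [Group G] {x y : G} {m : ℕ} (h : y * x * y⁻¹ = x ^ m)
    (k : ℕ) : y ^ k * x * (y ^ k)⁻¹ = x ^ m ^ k := by
  induction k with
  | zero => simp
  | succ k ih =>
    calc y ^ (k + 1) * x * (y ^ (k + 1))⁻¹ = y * (y ^ k * x * (y ^ k)⁻¹) * y⁻¹ := by group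
      _ = x ^ m ^ (k + 1) := by rw [ih, ← conj_pow, h, ← pow_mul, pow_succ, Nat.mul_comm]

theorem orderOf_dvd_two_pow_orderOf_sub_one {G : Type*} [Group G] {x y : G}
    (h : y * x * y⁻¹ = x ^ 2) : orderOf x ∣ 2 ^ orderOf y - 1 := by
  have hfix : x ^ 2 ^ orderOf y = x ^ 1 := by
    simpa [pow_orderOf_eq_one] using (conj_pow_eq_pow_pow h (orderOf y)).symm
  exact (Nat.modEq_iff_dvd' Nat.one_le_two_pow).mp (pow_eq_pow_iff_modEq.mp hfix).symm

theorem eq_one_of_isConj_of_conj_eq_sq {G : Type*} [Group G] {x y : G} (hy : IsOfFinOrder y)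
    (hxy : IsConj x y) (h : y * x * y⁻¹ = x ^ 2) : x = 1 := by
  obtain ⟨c, hc⟩ := hxy
  have hord : orderOf x = orderOf y := SemiconjBy.orderOf_eq (↑c) hc
  have hdvd := orderOf_dvd_two_pow_orderOf_sub_one h
  rw [← hord] at hdvd
  rw [← orderOf_eq_one_iff]
  exact Nat.eq_one_of_dvd_two_pow_sub_one (hord ▸ hy.orderOf_pos.ne') hdvd

theorem stmt6_general {G : Type*} [Group G] (g h : G) (hconj : IsConj g h)
    (hrel : ∀ (Q : Type) [Group Q] [Finite Q] (φ : G →* Q), Function.Surjective φ →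
      φ h * φ g * (φ h)⁻¹ = (φ g) ^ 2) :
    ∀ (Q : Type) [Group Q] [Finite Q] (φ : G →* Q), Function.Surjective φ → φ g = 1 := by
  intro Q _ _ φ hφ
  exact eq_one_of_isConj_of_conj_eq_sq (isOfFinOrder_of_finite _) (φ.map_isConj hconj)
    (hrel Q φ hφ)

/-- Higman-type triviality: if `g` and `h` are conjugate elements of a finitely
generated group `G` and the relation `h g h⁻¹ = g²` holds in every finite quotient
of `G`, then the image of `g` is trivial in every finite quotient of `G`. -/
theorem stmt6 {G : Type*} [Group G] [Group.FG G] (g h : G) (hconj : IsConj g h)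
    (hrel : ∀ (Q : Type) [Group Q] [Finite Q] (φ : G →* Q), Function.Surjective φ →
      φ h * φ g * (φ h)⁻¹ = (φ g) ^ 2) :
    ∀ (Q : Type) [Group Q] [Finite Q] (φ : G →* Q), Function.Surjective φ → φ g = 1 :=
  stmt6_general g h hconj hrel
end
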